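/- arXiv:0804.1741 — 3 statements merged into one kernel-verified Lean document; each statement's English description precedes it below -/
import Mathlib

section
/- Let m be a natural number and α, β, γ, δ complex numbers. Then ∫₀^{2π} ∫₀^{π} (α ū + β v̄)^m (γ u + δ v)^m sinθ dθ dφ = (4π/(m+1)) · (αγ + βδ)^m. -/
open Complex Real

/-- The spinor coordinate `u = cos(θ/2)·e^{iφ/2}`. -/
noncomputable def spinU (θ φ : ℝ) : ℂ :=
  (Real.cos (θ / 2) : ℂ) * Complex.exp (Complex.I * φ / 2)

/-- The spinor coordinate `v = sin(θ/2)·e^{-iφ/2}`. -/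
noncomputable def spinV (θ φ : ℝ) : ℂ :=
  (Real.sin (θ / 2) : ℂ) * Complex.exp (-(Complex.I * φ / 2))

/-!
Write `c = cos (θ/2)`, `s = sin (θ/2)` and `e = exp (iφ/2)`, so that `u = c e` and `v = s e⁻¹`.
Expanding both factors binomially gives monomials
`C(m,j) C(m,k) α^j β^(m-j) γ^k δ^(m-k) c^(j+k) s^(2m-j-k) e^(2(k-j))`.
The `φ`-integral of `e^(2(k-j))` vanishes unless `j = k`, and on the diagonal the substitution
`x = c² = (1 + cos θ)/2` turns the `θ`-integral into the Beta integral
`2 j! (m-j)! / (m+1)! = 2 / ((m+1) C(m,j))`. The diagonal then resums by the binomial theorem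
to `(4π/(m+1)) (αγ + βδ)^m`.
-/

open intervalIntegral Finset

section Beta

open scoped Nat

theorem integral_pow_mul_one_sub_pow (a b : ℕ) :
    ∫ x in (0:ℝ)..1, x ^ a * (1 - x) ^ b = a ! * b ! / (a + b + 1)! := by
  have hbeta : Complex.betaIntegral (a + 1) (b + 1)
      = ((∫ x in (0:ℝ)..1, x ^ a * (1 - x) ^ b : ℝ) : ℂ) := by
    rw [Complex.betaIntegral, ← integral_ofReal]
    refine integral_congr fun x _ => ?_
    simp only [add_sub_cancel_right, Complex.cpow_natCast]
    push_cast
    ring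
  have h := Complex.betaIntegral_eq_Gamma_mul_div (a + 1) (b + 1)
    (by simp only [Complex.add_re, Complex.natCast_re, Complex.one_re]; positivity)
    (by simp only [Complex.add_re, Complex.natCast_re, Complex.one_re]; positivity)
  rw [hbeta, show (a : ℂ) + 1 + (b + 1) = ((a + b + 1 : ℕ) : ℂ) + 1 by push_cast; ring,
    Complex.Gamma_nat_eq_factorial, Complex.Gamma_nat_eq_factorial,
    Complex.Gamma_nat_eq_factorial] at h
  exact Complex.ofReal_injective (by rw [h]; push_cast; ring)

theorem integral_cos_half_pow_mul_sin_half_pow_mul_sin (a b : ℕ) :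
    ∫ θ in (0:ℝ)..π, Real.cos (θ / 2) ^ (2 * a) * Real.sin (θ / 2) ^ (2 * b) * Real.sin θ
      = 2 * (a ! * b ! / (a + b + 1)!) := by
  have hsub := integral_comp_mul_deriv (a := 0) (b := π)
    (f := fun θ => (1 + Real.cos θ) / 2) (f' := fun θ => -Real.sin θ / 2)
    (g := fun x => x ^ a * (1 - x) ^ b)
    (fun θ _ => by simpa using ((Real.hasDerivAt_cos θ).const_add 1).div_const 2)
    (by fun_prop) (by fun_prop)
  norm_num only [Function.comp, Real.cos_zero, Real.cos_pi] at hsub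
  rw [integral_symm 0 1, integral_pow_mul_one_sub_pow] at hsub
  have hcos (θ : ℝ) : Real.cos (θ / 2) ^ 2 = (1 + Real.cos θ) / 2 := by
    rw [Real.cos_sq, mul_div_cancel₀ _ two_ne_zero]; ring
  have hsin (θ : ℝ) : Real.sin (θ / 2) ^ 2 = 1 - (1 + Real.cos θ) / 2 := by
    rw [Real.sin_sq, hcos]
  calc ∫ θ in (0:ℝ)..π, Real.cos (θ / 2) ^ (2 * a) * Real.sin (θ / 2) ^ (2 * b) * Real.sin θ
      = ∫ θ in (0:ℝ)..π, -2 * (((1 + Real.cos θ) / 2) ^ a * (1 - (1 + Real.cos θ) / 2) ^ b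
          * (-Real.sin θ / 2)) :=
        integral_congr fun θ _ => by rw [pow_mul, pow_mul, hcos, hsin]; ring
    _ = 2 * (a ! * b ! / (a + b + 1)!) := by rw [integral_const_mul, hsub]; ring

end Beta

theorem integral_exp_int_mul_mul_I (n : ℤ) :
    ∫ φ in (0:ℝ)..2 * π, exp (n * φ * I) = if n = 0 then (2 * π : ℂ) else 0 := by
  split_ifs with hn
  · simp [hn]
  · have hnI : (n : ℂ) * I ≠ 0 := by simp [hn, I_ne_zero]
    simp_rw [mul_right_comm _ _ I]
    rw [integral_exp_mul_complex hnI, ofReal_zero, mul_zero, Complex.exp_zero,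
      show (n : ℂ) * I * ((2 * π : ℝ) : ℂ) = n * (2 * π * I) by push_cast; ring,
      exp_int_mul_two_pi_mul_I, sub_self, zero_div]

theorem integral_sum_sum_mul_exp_sub_mul_I (s : Finset ℕ) (c : ℕ → ℕ → ℂ) :
    ∫ φ in (0:ℝ)..2 * π, ∑ j ∈ s, ∑ k ∈ s, c j k * exp (((k - j : ℤ) : ℂ) * φ * I)
      = 2 * π * ∑ j ∈ s, c j j := by
  have hcont (j k : ℕ) : Continuous fun φ : ℝ => c j k * exp (((k - j : ℤ) : ℂ) * φ * I) := by
    fun_prop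
  rw [integral_finsetSum fun j _ =>
    (continuous_finsetSum _ fun k _ => hcont j k).intervalIntegrable _ _, mul_sum]
  refine sum_congr rfl fun j hj => ?_
  rw [integral_finsetSum fun k _ => (hcont j k).intervalIntegrable _ _]
  simp only [integral_const_mul,
    integral_exp_int_mul_mul_I, sub_eq_zero, Nat.cast_inj, mul_ite, mul_zero,
    sum_ite_eq', if_pos hj]
  ring

open ComplexConjugate

lemma conj_spinU (θ φ : ℝ) :
    conj (spinU θ φ) = (Real.cos (θ / 2) : ℂ) * exp (-(I * φ / 2)) := by
  simp only [spinU, map_mul, conj_ofReal, ← exp_conj, map_div₀, conj_I, map_ofNat]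
  ring_nf

lemma conj_spinV (θ φ : ℝ) :
    conj (spinV θ φ) = (Real.sin (θ / 2) : ℂ) * exp (I * φ / 2) := by
  simp only [spinV, map_mul, conj_ofReal, ← exp_conj, map_neg, map_div₀, conj_I, map_ofNat]
  ring_nf

lemma spinor_monomial_eq {m j k : ℕ} (hj : j ≤ m) (hk : k ≤ m) (α β γ δ : ℂ) (θ φ : ℝ) :
    (α * conj (spinU θ φ)) ^ j * (β * conj (spinV θ φ)) ^ (m - j) *
        ((γ * spinU θ φ) ^ k * (δ * spinV θ φ) ^ (m - k))
      = α ^ j * β ^ (m - j) * γ ^ k * δ ^ (m - k) * exp (((k - j : ℤ) : ℂ) * φ * I) *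
          (Real.cos (θ / 2) ^ (j + k) * Real.sin (θ / 2) ^ (m - j + (m - k)) : ℝ) := by
  have hphase : exp (-(I * φ / 2)) ^ j * exp (I * φ / 2) ^ (m - j) * exp (I * φ / 2) ^ k *
      exp (-(I * φ / 2)) ^ (m - k) = exp (((k - j : ℤ) : ℂ) * φ * I) := by
    simp only [← Complex.exp_nat_mul, ← Complex.exp_add]
    congr 1
    push_cast [Nat.cast_sub hj, Nat.cast_sub hk]
    ring
  rw [conj_spinU, conj_spinV, spinU, spinV, ← hphase]
  push_cast
  ring

lemma spinor_forms_pow_mul_pow_eq_sum (m : ℕ) (α β γ δ : ℂ) (θ φ : ℝ) :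
    (α * conj (spinU θ φ) + β * conj (spinV θ φ)) ^ m * (γ * spinU θ φ + δ * spinV θ φ) ^ m
      = ∑ j ∈ range (m + 1), ∑ k ∈ range (m + 1),
          m.choose j * m.choose k * α ^ j * β ^ (m - j) * γ ^ k * δ ^ (m - k) *
            exp (((k - j : ℤ) : ℂ) * φ * I) *
            (Real.cos (θ / 2) ^ (j + k) * Real.sin (θ / 2) ^ (m - j + (m - k)) : ℝ) := by
  rw [add_pow, add_pow, sum_mul_sum]
  refine sum_congr rfl fun j hj => sum_congr rfl fun k hk => ?_
  linear_combination (m.choose j * m.choose k : ℂ) *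
    spinor_monomial_eq (Nat.lt_succ_iff.mp (mem_range.mp hj)) (Nat.lt_succ_iff.mp (mem_range.mp hk))
      α β γ δ θ φ

lemma integral_spinor_forms_pow_mul_pow_mul_sin (m : ℕ) (α β γ δ : ℂ) (φ : ℝ) :
    ∫ θ in (0:ℝ)..π, (α * conj (spinU θ φ) + β * conj (spinV θ φ)) ^ m *
        (γ * spinU θ φ + δ * spinV θ φ) ^ m * (Real.sin θ : ℂ)
      = ∑ j ∈ range (m + 1), ∑ k ∈ range (m + 1),
          m.choose j * m.choose k * α ^ j * β ^ (m - j) * γ ^ k * δ ^ (m - k) *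
            ((∫ θ in (0:ℝ)..π, Real.cos (θ / 2) ^ (j + k) * Real.sin (θ / 2) ^ (m - j + (m - k)) *
              Real.sin θ : ℝ) : ℂ) * exp (((k - j : ℤ) : ℂ) * φ * I) := by
  simp_rw [spinor_forms_pow_mul_pow_eq_sum, sum_mul]
  rw [integral_finsetSum fun j _ =>
    (continuous_finsetSum _ fun k _ => by fun_prop).intervalIntegrable _ _]
  refine sum_congr rfl fun j _ => ?_
  rw [integral_finsetSum fun k _ => (by fun_prop : Continuous _).intervalIntegrable _ _]
  refine sum_congr rfl fun k _ => ?_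
  simp_rw [mul_assoc _ _ (Real.sin _ : ℂ), ← ofReal_mul]
  rw [integral_const_mul, integral_ofReal]
  ring

/-- `∫₀^{2π} ∫₀^{π} (αū + βv̄)^m (γu + δv)^m sinθ dθ dφ = (4π/(m+1))·(αγ + βδ)^m`. -/
theorem spinor_power_integral_eq (m : ℕ) (α β γ δ : ℂ) :
    (∫ φ in (0:ℝ)..(2 * Real.pi), ∫ θ in (0:ℝ)..Real.pi,
        (α * (starRingEnd ℂ) (spinU θ φ) + β * (starRingEnd ℂ) (spinV θ φ)) ^ m *
          (γ * spinU θ φ + δ * spinV θ φ) ^ m * (Real.sin θ : ℂ))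
      = ((4 * Real.pi / (m + 1) : ℝ) : ℂ) * (α * γ + β * δ) ^ m := by
  simp_rw [integral_spinor_forms_pow_mul_pow_mul_sin]
  rw [integral_sum_sum_mul_exp_sub_mul_I, add_pow, mul_sum, mul_sum]
  refine sum_congr rfl fun j hj => ?_
  have hjm : j ≤ m := Nat.lt_succ_iff.mp (mem_range.mp hj)
  have hchoose : (m.choose j : ℂ) * (j.factorial * (m - j).factorial / (m + 1).factorial)
      = 1 / (m + 1) := by
    rw [Nat.cast_choose ℂ hjm, Nat.factorial_succ]
    push_cast
    field_simp [Nat.factorial_ne_zero]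
  rw [← two_mul j, ← two_mul (m - j), integral_cos_half_pow_mul_sin_half_pow_mul_sin,
    Nat.add_sub_cancel' hjm]
  push_cast
  linear_combination (4 * π * m.choose j * (α * γ) ^ j * (β * δ) ^ (m - j) : ℂ) * hchoose
end

section
/- Let R be a (possibly noncommutative) associative ring with unit containing elements a_j, b_j, a_j†, b_j† for 1 ≤ j ≤ L satisfying the bosonic commutation relations a_i a_j† − a_j† a_i = δ_{ij}·1 and b_i b_j† − b_j† b_i = δ_{ij}·1, while every other pair of these generators commutes (all daggered elements commute among themselves, all undaggered elements commute among themselves, and a-type elements commute with b-type elements regardless of daggers). Set C_j = a_j† b_{j+1}† − b_j† a_{j+1}† for 1 ≤ j ≤ L−1. Then for any natural numbers M₁, …, M_{L−1}, both S⁺ = Σ_{j=1}^{L} a_j† b_j and S⁻ = Σ_{j=1}^{L} b_j† a_j commute with the product Π_{j=1}^{L−1} C_j^{M_j}. -/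
/-!
The commutator `D = S·(-) - (-)·S` with `S = ∑ⱼ xⱼ yⱼ` is a derivation. Under the canonical
relations `yᵢ zⱼ - zⱼ yᵢ = δᵢⱼ`, with the `x`'s commuting with everything in sight, `D` kills every `xₖ` and
sends `zₖ` to `xₖ`. Hence `D (xₖ zₖ' - zₖ xₖ') = xₖ xₖ' - xₖ xₖ' = 0`. For `S⁺` take
`(x, y, z) = (a†, b, b†)`, for `S⁻` take `(b†, a, a†)`; in both cases the bond
`a†ₖ b†ₖ₊₁ - b†ₖ a†ₖ₊₁` is `±(xₖ zₖ₊₁ - zₖ xₖ₊₁)`.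
-/

open Finset

theorem commute_mul_sub_mul_of_commutator_eq {R : Type*} [Ring R] {S p p' q q' : R}
    (hp : Commute S p) (hp' : Commute S p') (hq : S * q - q * S = p)
    (hq' : S * q' - q' * S = p') : Commute S (p * q' - q * p') := by
  have leibniz : S * (p * q' - q * p') - (p * q' - q * p') * S
      = (S * p - p * S) * q' + p * (S * q' - q' * S)
        - (S * q - q * S) * p' - q * (S * p' - p' * S) := by
    noncomm_ring
  rw [hq, hq', hp.eq, hp'.eq, sub_self, sub_self] at leibniz
  exact sub_eq_zero.1 (by simpa using leibniz)

section CanonicalPair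

variable {R ι : Type*} [Ring R] {s : Finset ι} {x y z : ι → R}

theorem commute_sum_mul_of_commute {w : R} (hx : ∀ i ∈ s, Commute (x i) w)
    (hy : ∀ i ∈ s, Commute (y i) w) : Commute (∑ i ∈ s, x i * y i) w :=
  Commute.sum_left _ _ _ fun i hi => (hx i hi).mul_left (hy i hi)

theorem sum_mul_commutator_eq [DecidableEq ι] (hxz : ∀ i ∈ s, ∀ j ∈ s, Commute (x i) (z j))
    (hyz : ∀ i ∈ s, ∀ j ∈ s, y i * z j - z j * y i = if i = j then 1 else 0)
    {k : ι} (hk : k ∈ s) :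
    (∑ i ∈ s, x i * y i) * z k - z k * ∑ i ∈ s, x i * y i = x k := by
  have term : ∀ i ∈ s, x i * y i * z k - z k * (x i * y i) = if i = k then x i else 0 := by
    intro i hi
    rw [← mul_assoc, ← (hxz i hi k hk).eq, mul_assoc, mul_assoc, ← mul_sub, hyz i hi k hk,
      mul_ite, mul_one, mul_zero]
  rw [sum_mul, mul_sum, ← sum_sub_distrib, sum_congr rfl term, sum_ite_eq' s k x, if_pos hk]

theorem commute_sum_mul_hopping [DecidableEq ι] (hxx : ∀ i ∈ s, ∀ j ∈ s, Commute (x i) (x j))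
    (hyx : ∀ i ∈ s, ∀ j ∈ s, Commute (y i) (x j))
    (hxz : ∀ i ∈ s, ∀ j ∈ s, Commute (x i) (z j))
    (hyz : ∀ i ∈ s, ∀ j ∈ s, y i * z j - z j * y i = if i = j then 1 else 0)
    {k k' : ι} (hk : k ∈ s) (hk' : k' ∈ s) :
    Commute (∑ i ∈ s, x i * y i) (x k * z k' - z k * x k') :=
  commute_mul_sub_mul_of_commutator_eq
    (commute_sum_mul_of_commute (fun i hi => hxx i hi k hk) fun i hi => hyx i hi k hk)
    (commute_sum_mul_of_commute (fun i hi => hxx i hi k' hk') fun i hi => hyx i hi k' hk')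
    (sum_mul_commutator_eq hxz hyz hk) (sum_mul_commutator_eq hxz hyz hk')

end CanonicalPair

theorem Commute.list_prod_map_pow_right {R ι : Type*} [Monoid R] {S : R} {f : ι → R}
    {e : ι → ℕ} {l : List ι} (h : ∀ k ∈ l, Commute S (f k)) :
    Commute S (l.map fun k => f k ^ e k).prod :=
  Commute.list_prod_right _ _ <| by
    simpa only [List.forall_mem_map] using fun k hk => (h k hk).pow_right (e k)

theorem total_spin_pm_commutes_with_valence_bonds_general (R : Type*) [Ring R] (L : ℕ)
    (a b ad bd : ℕ → R)
    (haad : ∀ i ∈ Finset.Icc 1 L, ∀ j ∈ Finset.Icc 1 L,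
      a i * ad j - ad j * a i = if i = j then 1 else 0)
    (hbbd : ∀ i ∈ Finset.Icc 1 L, ∀ j ∈ Finset.Icc 1 L,
      b i * bd j - bd j * b i = if i = j then 1 else 0)
    (hadad : ∀ i ∈ Finset.Icc 1 L, ∀ j ∈ Finset.Icc 1 L, ad i * ad j = ad j * ad i)
    (hbdbd : ∀ i ∈ Finset.Icc 1 L, ∀ j ∈ Finset.Icc 1 L, bd i * bd j = bd j * bd i)
    (habd : ∀ i ∈ Finset.Icc 1 L, ∀ j ∈ Finset.Icc 1 L, a i * bd j = bd j * a i)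
    (hadb : ∀ i ∈ Finset.Icc 1 L, ∀ j ∈ Finset.Icc 1 L, ad i * b j = b j * ad i)
    (hadbd : ∀ i ∈ Finset.Icc 1 L, ∀ j ∈ Finset.Icc 1 L, ad i * bd j = bd j * ad i)
    (M : ℕ → ℕ) :
    (∑ j ∈ Finset.Icc 1 L, ad j * b j) *
        ((List.range (L - 1)).map
          (fun k => (ad (k + 1) * bd (k + 2) - bd (k + 1) * ad (k + 2)) ^ M (k + 1))).prod
      = ((List.range (L - 1)).map
          (fun k => (ad (k + 1) * bd (k + 2) - bd (k + 1) * ad (k + 2)) ^ M (k + 1))).prod *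
        (∑ j ∈ Finset.Icc 1 L, ad j * b j) ∧
    (∑ j ∈ Finset.Icc 1 L, bd j * a j) *
        ((List.range (L - 1)).map
          (fun k => (ad (k + 1) * bd (k + 2) - bd (k + 1) * ad (k + 2)) ^ M (k + 1))).prod
      = ((List.range (L - 1)).map
          (fun k => (ad (k + 1) * bd (k + 2) - bd (k + 1) * ad (k + 2)) ^ M (k + 1))).prod *
        (∑ j ∈ Finset.Icc 1 L, bd j * a j) := by
  have sites : ∀ k ∈ List.range (L - 1), k + 1 ∈ Icc 1 L ∧ k + 2 ∈ Icc 1 L := by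
    intro k hk
    simp only [List.mem_range, mem_Icc] at hk ⊢
    omega
  constructor
  · refine (Commute.list_prod_map_pow_right fun k hk => ?_).eq
    exact commute_sum_mul_hopping hadad (fun i hi j hj => (hadb j hj i hi).symm) hadbd hbbd
      (sites k hk).1 (sites k hk).2
  · refine (Commute.list_prod_map_pow_right fun k hk => ?_).eq
    rw [← neg_sub]
    exact (commute_sum_mul_hopping hbdbd habd (fun i hi j hj => (hadbd j hj i hi).symm) haad
      (sites k hk).1 (sites k hk).2).neg_right

/-- The total spin raising and lowering operators `S⁺ = Σ_j a_j†b_j` and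
`S⁻ = Σ_j b_j†a_j` commute with the product of valence bonds
`∏_{j=1}^{L-1} (a_j†b_{j+1}† − b_j†a_{j+1}†)^{M_j}` (the daggered generators
commute, so the ordered product below is the unambiguous product). -/
theorem total_spin_pm_commutes_with_valence_bonds (R : Type*) [Ring R] (L : ℕ)
    (a b ad bd : ℕ → R)
    (haad : ∀ i ∈ Finset.Icc 1 L, ∀ j ∈ Finset.Icc 1 L,
      a i * ad j - ad j * a i = if i = j then 1 else 0)
    (hbbd : ∀ i ∈ Finset.Icc 1 L, ∀ j ∈ Finset.Icc 1 L,
      b i * bd j - bd j * b i = if i = j then 1 else 0)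
    (haa : ∀ i ∈ Finset.Icc 1 L, ∀ j ∈ Finset.Icc 1 L, a i * a j = a j * a i)
    (hbb : ∀ i ∈ Finset.Icc 1 L, ∀ j ∈ Finset.Icc 1 L, b i * b j = b j * b i)
    (hadad : ∀ i ∈ Finset.Icc 1 L, ∀ j ∈ Finset.Icc 1 L, ad i * ad j = ad j * ad i)
    (hbdbd : ∀ i ∈ Finset.Icc 1 L, ∀ j ∈ Finset.Icc 1 L, bd i * bd j = bd j * bd i)
    (hab : ∀ i ∈ Finset.Icc 1 L, ∀ j ∈ Finset.Icc 1 L, a i * b j = b j * a i)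
    (habd : ∀ i ∈ Finset.Icc 1 L, ∀ j ∈ Finset.Icc 1 L, a i * bd j = bd j * a i)
    (hadb : ∀ i ∈ Finset.Icc 1 L, ∀ j ∈ Finset.Icc 1 L, ad i * b j = b j * ad i)
    (hadbd : ∀ i ∈ Finset.Icc 1 L, ∀ j ∈ Finset.Icc 1 L, ad i * bd j = bd j * ad i)
    (M : ℕ → ℕ) :
    (∑ j ∈ Finset.Icc 1 L, ad j * b j) *
        ((List.range (L - 1)).map
          (fun k => (ad (k + 1) * bd (k + 2) - bd (k + 1) * ad (k + 2)) ^ M (k + 1))).prod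
      = ((List.range (L - 1)).map
          (fun k => (ad (k + 1) * bd (k + 2) - bd (k + 1) * ad (k + 2)) ^ M (k + 1))).prod *
        (∑ j ∈ Finset.Icc 1 L, ad j * b j) ∧
    (∑ j ∈ Finset.Icc 1 L, bd j * a j) *
        ((List.range (L - 1)).map
          (fun k => (ad (k + 1) * bd (k + 2) - bd (k + 1) * ad (k + 2)) ^ M (k + 1))).prod
      = ((List.range (L - 1)).map
          (fun k => (ad (k + 1) * bd (k + 2) - bd (k + 1) * ad (k + 2)) ^ M (k + 1))).prod *
        (∑ j ∈ Finset.Icc 1 L, bd j * a j) :=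
  total_spin_pm_commutes_with_valence_bonds_general R L a b ad bd haad hbbd hadad hbdbd habd hadb
    hadbd M
end

section
/- Let R be a (possibly noncommutative) associative ring with unit containing elements a_j, b_j, a_j†, b_j† for 1 ≤ j ≤ L satisfying the bosonic commutation relations a_i a_j† − a_j† a_i = δ_{ij}·1 and b_i b_j† − b_j† b_i = δ_{ij}·1, while every other pair of these generators commutes (all daggered elements commute among themselves, all undaggered elements commute among themselves, and a-type elements commute with b-type elements regardless of daggers). Set C_j = a_j† b_{j+1}† − b_j† a_{j+1}† for 1 ≤ j ≤ L−1. Then for any natural numbers M₁, …, M_{L−1}, the element Σ_{j=1}^{L} (a_j† a_j − b_j† b_j) commutes with the product Π_{j=1}^{L−1} C_j^{M_j}. -/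
/-!
Write `N = ∑ⱼ (a†ⱼ aⱼ − b†ⱼ bⱼ)`. The inner derivation `⁅N, -⁆` sends `a†ᵢ ↦ a†ᵢ` and
`b†ᵢ ↦ −b†ᵢ`, so it kills every product `a†ᵢ b†ₖ` and `b†ᵢ a†ₖ`: the valence bonds conserve
`N`, hence so do their powers and products.
-/

attribute [local instance] LieRing.ofAssociativeRing

section Commutator

variable {R : Type*} [Ring R]

theorem Ring.mul_lie (x y z : R) : ⁅x * y, z⁆ = x * ⁅y, z⁆ + ⁅x, z⁆ * y := by
  simp only [Ring.lie_def]
  noncomm_ring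

theorem Ring.lie_mul (x y z : R) : ⁅x, y * z⁆ = ⁅x, y⁆ * z + y * ⁅x, z⁆ := by
  simp only [Ring.lie_def]
  noncomm_ring

theorem commute_mul_of_lie_eq_of_lie_eq_neg {x u v : R} (hu : ⁅x, u⁆ = u) (hv : ⁅x, v⁆ = -v) :
    Commute x (u * v) := by
  rw [commute_iff_lie_eq, Ring.lie_mul, hu, hv, mul_neg, add_neg_cancel]

theorem commute_mul_of_lie_eq_neg_of_lie_eq {x u v : R} (hu : ⁅x, u⁆ = -u) (hv : ⁅x, v⁆ = v) :
    Commute x (u * v) := by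
  rw [commute_iff_lie_eq, Ring.lie_mul, hu, hv, neg_mul, neg_add_cancel]

theorem lie_sum_mul_of_lie_eq_zero {ι : Type*} {s : Finset ι} (p q : ι → R) (u : R)
    (hp : ∀ j ∈ s, ⁅p j, u⁆ = 0) : ⁅∑ j ∈ s, p j * q j, u⁆ = ∑ j ∈ s, p j * ⁅q j, u⁆ := by
  rw [sum_lie]
  refine Finset.sum_congr rfl fun j hj => ?_
  rw [Ring.mul_lie, hp j hj, zero_mul, add_zero]

end Commutator

section Bosons

variable {ι R : Type*} [Ring R] [DecidableEq ι] {s : Finset ι} {a b ad bd : ι → R} {i : ι}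

theorem lie_sum_number_sub_number_creation (hi : i ∈ s)
    (haad : ∀ j ∈ s, ⁅a j, ad i⁆ = if j = i then 1 else 0) (hadad : ∀ j ∈ s, ⁅ad j, ad i⁆ = 0)
    (hbad : ∀ j ∈ s, ⁅b j, ad i⁆ = 0) (hbdad : ∀ j ∈ s, ⁅bd j, ad i⁆ = 0) :
    ⁅∑ j ∈ s, (ad j * a j - bd j * b j), ad i⁆ = ad i := by
  have ha : ∑ j ∈ s, ad j * ⁅a j, ad i⁆ = ad i := by
    rw [Finset.sum_congr rfl fun j hj => congrArg (ad j * ·) (haad j hj)]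
    simp [hi]
  have hb : ∑ j ∈ s, bd j * ⁅b j, ad i⁆ = 0 :=
    Finset.sum_eq_zero fun j hj => by rw [hbad j hj, mul_zero]
  rw [Finset.sum_sub_distrib, sub_lie, lie_sum_mul_of_lie_eq_zero _ _ _ hadad,
    lie_sum_mul_of_lie_eq_zero _ _ _ hbdad, ha, hb, sub_zero]

theorem lie_sum_number_sub_number_annihilation (hi : i ∈ s)
    (hbbd : ∀ j ∈ s, ⁅b j, bd i⁆ = if j = i then 1 else 0) (hbdbd : ∀ j ∈ s, ⁅bd j, bd i⁆ = 0)
    (habd : ∀ j ∈ s, ⁅a j, bd i⁆ = 0) (hadbd : ∀ j ∈ s, ⁅ad j, bd i⁆ = 0) :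
    ⁅∑ j ∈ s, (ad j * a j - bd j * b j), bd i⁆ = -bd i := by
  have hswap : ∑ j ∈ s, (ad j * a j - bd j * b j) = -∑ j ∈ s, (bd j * b j - ad j * a j) := by
    simp only [← Finset.sum_neg_distrib, neg_sub]
  rw [hswap, neg_lie, lie_sum_number_sub_number_creation hi hbbd hbdbd habd hadbd]

end Bosons

theorem total_spin_z_commutes_with_valence_bonds_general (R : Type*) [Ring R] (L : ℕ)
    (a b ad bd : ℕ → R)
    (haad : ∀ i ∈ Finset.Icc 1 L, ∀ j ∈ Finset.Icc 1 L,
      a i * ad j - ad j * a i = if i = j then 1 else 0)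
    (hbbd : ∀ i ∈ Finset.Icc 1 L, ∀ j ∈ Finset.Icc 1 L,
      b i * bd j - bd j * b i = if i = j then 1 else 0)
    (hadad : ∀ i ∈ Finset.Icc 1 L, ∀ j ∈ Finset.Icc 1 L, ad i * ad j = ad j * ad i)
    (hbdbd : ∀ i ∈ Finset.Icc 1 L, ∀ j ∈ Finset.Icc 1 L, bd i * bd j = bd j * bd i)
    (habd : ∀ i ∈ Finset.Icc 1 L, ∀ j ∈ Finset.Icc 1 L, a i * bd j = bd j * a i)
    (hadb : ∀ i ∈ Finset.Icc 1 L, ∀ j ∈ Finset.Icc 1 L, ad i * b j = b j * ad i)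
    (hadbd : ∀ i ∈ Finset.Icc 1 L, ∀ j ∈ Finset.Icc 1 L, ad i * bd j = bd j * ad i)
    (M : ℕ → ℕ) :
    (∑ j ∈ Finset.Icc 1 L, (ad j * a j - bd j * b j)) *
        ((List.range (L - 1)).map
          (fun k => (ad (k + 1) * bd (k + 2) - bd (k + 1) * ad (k + 2)) ^ M (k + 1))).prod
      = ((List.range (L - 1)).map
          (fun k => (ad (k + 1) * bd (k + 2) - bd (k + 1) * ad (k + 2)) ^ M (k + 1))).prod *
        (∑ j ∈ Finset.Icc 1 L, (ad j * a j - bd j * b j)) := by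
  set N := ∑ j ∈ Finset.Icc 1 L, (ad j * a j - bd j * b j)
  have hcr : ∀ i ∈ Finset.Icc 1 L, ⁅N, ad i⁆ = ad i := fun i hi =>
    lie_sum_number_sub_number_creation hi (fun j hj => haad j hj i hi)
      (fun j hj => Commute.lie_eq (hadad j hj i hi))
      (fun j hj => Commute.lie_eq (hadb i hi j hj).symm)
      (fun j hj => Commute.lie_eq (hadbd i hi j hj).symm)
  have han : ∀ i ∈ Finset.Icc 1 L, ⁅N, bd i⁆ = -bd i := fun i hi =>
    lie_sum_number_sub_number_annihilation hi (fun j hj => hbbd j hj i hi)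
      (fun j hj => Commute.lie_eq (hbdbd j hj i hi))
      (fun j hj => Commute.lie_eq (habd j hj i hi))
      (fun j hj => Commute.lie_eq (hadbd j hj i hi))
  refine (Commute.list_prod_right _ _ fun x hx => ?_).eq
  obtain ⟨k, hk, rfl⟩ := List.mem_map.mp hx
  rw [List.mem_range] at hk
  have hk1 : k + 1 ∈ Finset.Icc 1 L := Finset.mem_Icc.mpr ⟨by omega, by omega⟩
  have hk2 : k + 2 ∈ Finset.Icc 1 L := Finset.mem_Icc.mpr ⟨by omega, by omega⟩
  exact ((commute_mul_of_lie_eq_of_lie_eq_neg (hcr _ hk1) (han _ hk2)).sub_right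
    (commute_mul_of_lie_eq_neg_of_lie_eq (han _ hk1) (hcr _ hk2))).pow_right _

/-- Twice the total `Sᶻ` operator `Σ_j (a_j†a_j − b_j†b_j)` commutes with the
product of valence bonds `∏_{j=1}^{L-1} (a_j†b_{j+1}† − b_j†a_{j+1}†)^{M_j}`
(the daggered generators commute, so the ordered product below is the
unambiguous product). -/
theorem total_spin_z_commutes_with_valence_bonds (R : Type*) [Ring R] (L : ℕ)
    (a b ad bd : ℕ → R)
    (haad : ∀ i ∈ Finset.Icc 1 L, ∀ j ∈ Finset.Icc 1 L,
      a i * ad j - ad j * a i = if i = j then 1 else 0)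
    (hbbd : ∀ i ∈ Finset.Icc 1 L, ∀ j ∈ Finset.Icc 1 L,
      b i * bd j - bd j * b i = if i = j then 1 else 0)
    (haa : ∀ i ∈ Finset.Icc 1 L, ∀ j ∈ Finset.Icc 1 L, a i * a j = a j * a i)
    (hbb : ∀ i ∈ Finset.Icc 1 L, ∀ j ∈ Finset.Icc 1 L, b i * b j = b j * b i)
    (hadad : ∀ i ∈ Finset.Icc 1 L, ∀ j ∈ Finset.Icc 1 L, ad i * ad j = ad j * ad i)
    (hbdbd : ∀ i ∈ Finset.Icc 1 L, ∀ j ∈ Finset.Icc 1 L, bd i * bd j = bd j * bd i)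
    (hab : ∀ i ∈ Finset.Icc 1 L, ∀ j ∈ Finset.Icc 1 L, a i * b j = b j * a i)
    (habd : ∀ i ∈ Finset.Icc 1 L, ∀ j ∈ Finset.Icc 1 L, a i * bd j = bd j * a i)
    (hadb : ∀ i ∈ Finset.Icc 1 L, ∀ j ∈ Finset.Icc 1 L, ad i * b j = b j * ad i)
    (hadbd : ∀ i ∈ Finset.Icc 1 L, ∀ j ∈ Finset.Icc 1 L, ad i * bd j = bd j * ad i)
    (M : ℕ → ℕ) :
    (∑ j ∈ Finset.Icc 1 L, (ad j * a j - bd j * b j)) *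
        ((List.range (L - 1)).map
          (fun k => (ad (k + 1) * bd (k + 2) - bd (k + 1) * ad (k + 2)) ^ M (k + 1))).prod
      = ((List.range (L - 1)).map
          (fun k => (ad (k + 1) * bd (k + 2) - bd (k + 1) * ad (k + 2)) ^ M (k + 1))).prod *
        (∑ j ∈ Finset.Icc 1 L, (ad j * a j - bd j * b j)) :=
  total_spin_z_commutes_with_valence_bonds_general R L a b ad bd haad hbbd hadad hbdbd habd hadb
    hadbd M
end
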